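/- Let (A, m) be a Noetherian local ring, B a commutative ring, f : A → B a ring homomorphism, and J an ideal of B with J ⊆ Jac(B) that is finitely generated as an A-module. Then the Krull dimension of the amalgamation A ⋈^f J equals the Krull dimension of A, and depth A ⋈^f J = min(depth A, depth J). -/

import Mathlib

open IsLocalRing

variable {A B : Type} [CommRing A] [CommRing B]

/-- The amalgamation `A ⋈^f J = {(a, f a + j) : a ∈ A, j ∈ J}` of `A` and `B` along the
ideal `J` with respect to the ring homomorphism `f`, as a subring of `A × B`. -/
def Amalg (f : A →+* B) (J : Ideal B) : Subring (A × B) where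
  carrier := {x | ∃ a : A, ∃ j ∈ J, x = (a, f a + j)}
  zero_mem' := ⟨0, 0, J.zero_mem, by ext <;> simp⟩
  one_mem' := ⟨1, 0, J.zero_mem, by ext <;> simp⟩
  add_mem' := by
    rintro x y ⟨a, j, hj, rfl⟩ ⟨b, k, hk, rfl⟩
    exact ⟨a + b, j + k, J.add_mem hj hk, by
      simp only [Prod.mk_add_mk, map_add, Prod.mk.injEq]
      exact ⟨trivial, by ring⟩⟩
  neg_mem' := by
    rintro x ⟨a, j, hj, rfl⟩
    exact ⟨-a, -j, J.neg_mem hj, by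
      simp only [Prod.neg_mk, map_neg, Prod.mk.injEq]
      exact ⟨trivial, by ring⟩⟩
  mul_mem' := by
    rintro x y ⟨a, j, hj, rfl⟩ ⟨b, k, hk, rfl⟩
    exact ⟨a * b, f a * k + j * f b + j * k,
      J.add_mem (J.add_mem (J.mul_mem_left _ hk) (J.mul_mem_right _ hj)) (J.mul_mem_right _ hj),
      by
      simp only [Prod.mk_mul_mk, map_mul, Prod.mk.injEq]
      exact ⟨trivial, by ring⟩⟩

/-- The canonical ring homomorphism `A → A ⋈^f J`, `a ↦ (a, f a)`. -/
def Amalg.incl (f : A →+* B) (J : Ideal B) : A →+* Amalg f J where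
  toFun a := ⟨(a, f a), a, 0, J.zero_mem, by simp⟩
  map_one' := Subtype.ext (by simp)
  map_mul' x y := Subtype.ext (by simp [Prod.mk_mul_mk])
  map_zero' := Subtype.ext (by simp)
  map_add' x y := Subtype.ext (by simp [Prod.mk_add_mk])

/-- `A ⋈^f J` as an `A`-module. -/
instance Amalg.moduleA (f : A →+* B) (J : Ideal B) : Module A (Amalg f J) :=
  Module.compHom _ (Amalg.incl f J)

noncomputable def lcDepth (R M : Type) [CommRing R] [IsLocalRing R]
    [AddCommGroup M] [Module R M] : ℕ∞ :=
  sInf {n : ℕ∞ | ∃ i : ℕ, n = (i : ℕ∞) ∧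
    Nontrivial ((localCohomology (maximalIdeal R) i).obj (ModuleCat.of R M))}

/-! `(a, f a + j) ↦ (a, j)` is an isomorphism `A ⋈^f J ≅ A × J` of `A`-modules. Hence
`A ⋈^f J` is module-finite, so integral, over `A`; by incomparability, contracting primes to `A`
is strictly monotone, which bounds its dimension by that of `A`, and the surjective first
projection onto `A` gives the other bound. Local cohomology is an additive functor, so
`H^i_m(A × J) ≅ H^i_m(A) × H^i_m(J)` and the first nonvanishing degree for `A × J` is the
smaller of those for `A` and `J`. -/

open CategoryTheory Limits

namespace CategoryTheory

section Additivity

variable {C D : Type*} [Category C] [Category D]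

lemma NatTrans.rightOp_add [Preadditive D] {F G : Cᵒᵖ ⥤ D} (α β : F ⟶ G) :
    NatTrans.rightOp (α + β) = NatTrans.rightOp α + NatTrans.rightOp β := by
  ext
  simp [NatTrans.rightOp, op_add]

lemma NatTrans.leftOp_add [Preadditive D] {F G : C ⥤ Dᵒᵖ} (α β : F ⟶ G) :
    NatTrans.leftOp (α + β) = NatTrans.leftOp α + NatTrans.leftOp β := by
  ext
  simp [NatTrans.leftOp, unop_add]

lemma NatTrans.mapHomologicalComplex_add [Preadditive C] [Preadditive D] {F G : C ⥤ D}
    [F.Additive] [G.Additive] (α β : F ⟶ G) {ι : Type*} (c : ComplexShape ι) :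
    NatTrans.mapHomologicalComplex (α + β) c =
      NatTrans.mapHomologicalComplex α c + NatTrans.mapHomologicalComplex β c := by
  ext
  simp only [NatTrans.mapHomologicalComplex, NatTrans.app_add, HomologicalComplex.add_f_apply]
  rfl

lemma NatTrans.leftDerived_add [Abelian C] [HasProjectiveResolutions C] [Abelian D]
    {F G : C ⥤ D} [F.Additive] [G.Additive] (α β : F ⟶ G) (n : ℕ) :
    NatTrans.leftDerived (α + β) n = NatTrans.leftDerived α n + NatTrans.leftDerived β n := by
  ext X
  let P : ProjectiveResolution X := (HasProjectiveResolution.out (Z := X)).some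
  rw [NatTrans.app_add, ProjectiveResolution.leftDerived_app_eq (α + β) P,
    ProjectiveResolution.leftDerived_app_eq α P, ProjectiveResolution.leftDerived_app_eq β P,
    NatTrans.mapHomologicalComplex_add, NatTrans.app_add, Functor.map_add]
  simp only [Preadditive.comp_add, Preadditive.add_comp]

instance linearYoneda_additive (R : Type*) [Ring R] (C : Type*) [Category C] [Preadditive C]
    [Linear R C] : (linearYoneda R C).Additive where
  map_add {_ _ f g} := by
    ext W x
    exact Preadditive.comp_add _ _ _ _ _ _

instance Ext_obj_additive (R : Type*) [Ring R] (C : Type*) [Category C] [Abelian C] [Linear R C]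
    [EnoughProjectives C] (n : ℕ) (X : Cᵒᵖ) : ((Ext R C n).obj X).Additive where
  map_add {_ _ f g} := by
    change (NatTrans.leftOp (NatTrans.leftDerived (NatTrans.rightOp
      ((linearYoneda R C).map (f + g))) n)).app X = _
    rw [Functor.map_add, NatTrans.rightOp_add, NatTrans.leftDerived_add, NatTrans.leftOp_add]
    rfl

instance Functor.colimit_additive {J : Type*} [Category J] [Preadditive C] [Preadditive D]
    [HasColimitsOfShape J D] (F : J ⥤ C ⥤ D) [∀ j, (F.obj j).Additive] :
    (colimit F).Additive where
  map_add {X _ f g} := by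
    have hc : IsColimit (((evaluation C D).obj X).mapCocone (colimit.cocone F)) :=
      isColimitOfPreserves _ (colimit.isColimit F)
    refine hc.hom_ext fun j => ?_
    change (colimit.ι F j).app X ≫ (colimit F).map (f + g) =
      (colimit.ι F j).app X ≫ ((colimit F).map f + (colimit F).map g)
    rw [← (colimit.ι F j).naturality, Functor.map_add, Preadditive.add_comp,
      (colimit.ι F j).naturality, (colimit.ι F j).naturality, Preadditive.comp_add]

end Additivity

end CategoryTheory

instance localCohomology_additive {R : Type} [CommRing R] (J : Ideal R) (i : ℕ) :
    (localCohomology J i).Additive :=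
  have := localCohomology.hasColimitDiagram (localCohomology.idealPowersDiagram J) i
  have : ∀ j,
      ((localCohomology.diagram (localCohomology.idealPowersDiagram J) i).obj j).Additive :=
    fun _ => Ext_obj_additive R (ModuleCat R) i _
  Functor.colimit_additive (localCohomology.diagram (localCohomology.idealPowersDiagram J) i)

theorem Prod.nontrivial_iff {P Q : Type*} [Nonempty P] [Nonempty Q] :
    Nontrivial (P × Q) ↔ Nontrivial P ∨ Nontrivial Q := by
  refine ⟨fun h => ?_, fun h => h.elim (fun _ => inferInstance) fun _ => inferInstance⟩
  by_contra! ⟨_, _⟩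
  exact not_subsingleton (P × Q) inferInstance

theorem CategoryTheory.Functor.nontrivial_obj_prod_iff {R : Type} [CommRing R]
    (F : ModuleCat R ⥤ ModuleCat R) [F.Additive] (M N : Type) [AddCommGroup M] [Module R M]
    [AddCommGroup N] [Module R N] :
    Nontrivial (F.obj (ModuleCat.of R (M × N))) ↔
      Nontrivial (F.obj (ModuleCat.of R M)) ∨ Nontrivial (F.obj (ModuleCat.of R N)) := by
  have : PreservesBinaryBiproducts F := preservesBinaryBiproducts_of_preservesBiproducts F
  let e : F.obj (ModuleCat.of R (M × N)) ≅
      ModuleCat.of R (F.obj (ModuleCat.of R M) × F.obj (ModuleCat.of R N)) :=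
    F.mapIso (ModuleCat.biprodIsoProd (.of R M) (.of R N)).symm ≪≫ F.mapBiprod _ _ ≪≫
      ModuleCat.biprodIsoProd _ _
  rw [e.toLinearEquiv.toEquiv.nontrivial_congr, Prod.nontrivial_iff]

section lcDepth

variable {R M N : Type} [CommRing R] [IsLocalRing R]
  [AddCommGroup M] [Module R M] [AddCommGroup N] [Module R N]

theorem lcDepth_congr (e : M ≃ₗ[R] N) : lcDepth R M = lcDepth R N := by
  have h (i : ℕ) := ((localCohomology (maximalIdeal R) i).mapIso
    e.toModuleIso).toLinearEquiv.toEquiv.nontrivial_congr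
  simp only [lcDepth, h]

theorem lcDepth_prod : lcDepth R (M × N) = min (lcDepth R M) (lcDepth R N) := by
  simp only [lcDepth, Functor.nontrivial_obj_prod_iff, and_or_left, exists_or, Set.ofPred_or,
    sInf_union]

end lcDepth

theorem ringKrullDim_le_of_isIntegral (R S : Type*) [CommRing R] [CommRing S] [Algebra R S]
    [Algebra.IsIntegral R S] : ringKrullDim S ≤ ringKrullDim R := by
  refine Order.krullDim_le_of_strictMono (PrimeSpectrum.comap (algebraMap R S)) fun P Q hPQ => ?_
  rw [← PrimeSpectrum.asIdeal_lt_asIdeal] at hPQ ⊢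
  obtain ⟨x, hxQ, hxP⟩ := SetLike.exists_of_lt hPQ
  exact Ideal.comap_lt_comap_of_integral_mem_sdiff hPQ.le ⟨hxQ, hxP⟩
    (Algebra.IsIntegral.isIntegral x)

namespace Amalg

variable (f : A →+* B) (J : Ideal B)

def equivProd [Module A J] (hsmul : ∀ (a : A) (x : J), a • x = f a • x) :
    Amalg f J ≃ₗ[A] A × J where
  toFun x := (x.1.1, ⟨x.1.2 - f x.1.1, by
    obtain ⟨a, j, hj, h⟩ := x.2
    simpa [h] using hj⟩)
  map_add' x y := by
    refine Prod.ext rfl (Subtype.ext ?_)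
    change (x.1.2 + y.1.2) - f (x.1.1 + y.1.1) = (x.1.2 - f x.1.1) + (y.1.2 - f y.1.1)
    rw [map_add]
    ring
  map_smul' a x := by
    refine Prod.ext rfl ?_
    rw [RingHom.id_apply, Prod.smul_snd, hsmul]
    refine Subtype.ext ?_
    change f a * x.1.2 - f (a * x.1.1) = f a * (x.1.2 - f x.1.1)
    rw [map_mul]
    ring
  invFun p := ⟨(p.1, f p.1 + p.2), p.1, p.2, p.2.2, rfl⟩
  left_inv x := Subtype.ext (Prod.ext rfl (by simp))
  right_inv p := Prod.ext rfl (Subtype.ext (add_sub_cancel_left _ _))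

theorem ringKrullDim_le_ringKrullDim_amalg : ringKrullDim A ≤ ringKrullDim (Amalg f J) :=
  ringKrullDim_le_of_surjective ((RingHom.fst A B).comp (Amalg f J).subtype)
    fun a => ⟨incl f J a, rfl⟩

end Amalg

theorem amalg_ringKrullDim_and_lcDepth_general (f : A →+* B) (J : Ideal B)
    [IsLocalRing A] :
    letI : Module A J := Module.compHom _ f
    Module.Finite A J →
    ringKrullDim (Amalg f J) = ringKrullDim A ∧
    lcDepth A (Amalg f J) = min (lcDepth A A) (lcDepth A J) := by
  let : Module A J := Module.compHom _ f
  intro _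
  let e := Amalg.equivProd f J fun _ _ => rfl
  let : Algebra A (Amalg f J) := (Amalg.incl f J).toAlgebra
  have : Module.Finite A (Amalg f J) := Module.Finite.equiv e.symm
  have : Algebra.IsIntegral A (Amalg f J) := Algebra.IsIntegral.of_finite A _
  exact ⟨le_antisymm (ringKrullDim_le_of_isIntegral A _)
      (Amalg.ringKrullDim_le_ringKrullDim_amalg f J),
    (lcDepth_congr e).trans lcDepth_prod⟩

theorem amalg_ringKrullDim_and_lcDepth (f : A →+* B) (J : Ideal B)
    [IsNoetherianRing A] [IsLocalRing A]
    (hJ : J ≤ (⊥ : Ideal B).jacobson) :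
    letI : Module A J := Module.compHom _ f
    Module.Finite A J →
    ringKrullDim (Amalg f J) = ringKrullDim A ∧
    lcDepth A (Amalg f J) = min (lcDepth A A) (lcDepth A J) :=
  amalg_ringKrullDim_and_lcDepth_general f J
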